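/- Let H be a finite-dimensional Hopf algebra over k with invertible antipode S, basis {e_i}, dual basis {e^i}. In the Heisenberg double H(H*), the element W̃ = Σ_i (ε # S(e_i)) ⊗ (e^i # 1) is a two-sided inverse of the canonical element W = Σ_i (ε # e_i) ⊗ (e^i # 1), i.e. W·W̃ = W̃·W = (ε # 1) ⊗ (ε # 1). -/

import Mathlib

open TensorProduct

noncomputable section

variable (k H : Type*) [CommRing k] [Ring H] [HopfAlgebra k H]

/-- The right action of `H` on `H*`: `(a ⇀ ν)(b) = ν(ba)`, as a bilinear map. -/
def rActL : H →ₗ[k] Module.Dual k H →ₗ[k] Module.Dual k H :=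
  LinearMap.mk₂ k (fun a ν => ν ∘ₗ LinearMap.mulRight k a)
    (fun a a' ν => by ext b; simp [mul_add])
    (fun c a ν => by ext b; simp [mul_smul_comm])
    (fun a ν ν' => by ext b; simp)
    (fun c a ν => by ext b; simp)

/-- `H ⊗ H* → H*`, `a ⊗ ν ↦ (a ⇀ ν)`. -/
def rActT : H ⊗[k] Module.Dual k H →ₗ[k] Module.Dual k H :=
  TensorProduct.lift (rActL k H)

/-- The convolution product on `H*`: `(ξ ∗ ν)(h) = Σ ξ(h₁)ν(h₂)`, as a bilinear map. -/
def convL : Module.Dual k H →ₗ[k] Module.Dual k H →ₗ[k] Module.Dual k H :=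
  LinearMap.mk₂ k
    (fun ξ ν => LinearMap.mul' k k ∘ₗ TensorProduct.map ξ ν ∘ₗ Coalgebra.comul)
    (fun ξ ξ' ν => by
      simp [TensorProduct.map_add_left, LinearMap.comp_add, LinearMap.add_comp])
    (fun c ξ ν => by
      simp [TensorProduct.map_smul_left, LinearMap.comp_smul, LinearMap.smul_comp])
    (fun ξ ν ν' => by
      simp [TensorProduct.map_add_right, LinearMap.comp_add, LinearMap.add_comp])
    (fun c ξ ν => by
      simp [TensorProduct.map_smul_right, LinearMap.comp_smul, LinearMap.smul_comp])

/-- `H* ⊗ H* → H*`, convolution. -/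
def convT : Module.Dual k H ⊗[k] Module.Dual k H →ₗ[k] Module.Dual k H :=
  TensorProduct.lift (convL k H)

/-- The underlying space of the Heisenberg double `H(H*) = H* # H`. -/
abbrev HD := Module.Dual k H ⊗[k] H

/-- The multiplication `(ξ # a)(ν # b) = Σ ξ ∗ (a₁ ⇀ ν) # a₂b` of the Heisenberg
double `H(H*)`, as a linear map on the tensor square. -/
def hmulT : HD k H ⊗[k] HD k H →ₗ[k] HD k H :=
  TensorProduct.map (convT k H) LinearMap.id
    ∘ₗ (TensorProduct.assoc k (Module.Dual k H) (Module.Dual k H) H).symm.toLinearMap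
    ∘ₗ TensorProduct.map LinearMap.id (TensorProduct.map (rActT k H) LinearMap.id)
    ∘ₗ TensorProduct.map LinearMap.id
        (TensorProduct.assoc k H (Module.Dual k H) H).symm.toLinearMap
    ∘ₗ (TensorProduct.assoc k (Module.Dual k H) H (Module.Dual k H ⊗[k] H)).toLinearMap
    ∘ₗ (TensorProduct.tensorTensorTensorComm k (Module.Dual k H) (Module.Dual k H) H H).toLinearMap
    ∘ₗ TensorProduct.map LinearMap.id (TensorProduct.map LinearMap.id (LinearMap.mul' k H))
    ∘ₗ TensorProduct.map LinearMap.id (TensorProduct.assoc k H H H).toLinearMap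
    ∘ₗ TensorProduct.map LinearMap.id (TensorProduct.map Coalgebra.comul LinearMap.id)
    ∘ₗ (TensorProduct.tensorTensorTensorComm k (Module.Dual k H) H (Module.Dual k H) H).toLinearMap

/-- The product of two elements of the Heisenberg double `H(H*)`. -/
def hmul (x y : HD k H) : HD k H := hmulT k H (x ⊗ₜ y)

/-- The unit `ε # 1` of the Heisenberg double. -/
def hone : HD k H := (Coalgebra.counit : Module.Dual k H) ⊗ₜ (1 : H)

/-- Componentwise multiplication on `H(H*) ⊗ H(H*)`. -/
def hmul2T : (HD k H ⊗[k] HD k H) ⊗[k] (HD k H ⊗[k] HD k H) →ₗ[k] HD k H ⊗[k] HD k H :=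
  TensorProduct.map (hmulT k H) (hmulT k H)
    ∘ₗ (TensorProduct.tensorTensorTensorComm k (HD k H) (HD k H) (HD k H) (HD k H)).toLinearMap

def hmul2 (x y : HD k H ⊗[k] HD k H) : HD k H ⊗[k] HD k H := hmul2T k H (x ⊗ₜ y)

/-- Componentwise multiplication on `H(H*) ⊗ H(H*) ⊗ H(H*)`. -/
def hmul3T :
    (HD k H ⊗[k] (HD k H ⊗[k] HD k H)) ⊗[k] (HD k H ⊗[k] (HD k H ⊗[k] HD k H)) →ₗ[k]
      HD k H ⊗[k] (HD k H ⊗[k] HD k H) :=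
  TensorProduct.map (hmulT k H) (hmul2T k H)
    ∘ₗ (TensorProduct.tensorTensorTensorComm k (HD k H) (HD k H ⊗[k] HD k H)
          (HD k H) (HD k H ⊗[k] HD k H)).toLinearMap

def hmul3 (x y : HD k H ⊗[k] (HD k H ⊗[k] HD k H)) :
    HD k H ⊗[k] (HD k H ⊗[k] HD k H) := hmul3T k H (x ⊗ₜ y)

/-- The embedding of `H(H*)⊗²` in legs 1,2 of the triple tensor power. -/
def leg12 : HD k H ⊗[k] HD k H →ₗ[k] HD k H ⊗[k] (HD k H ⊗[k] HD k H) :=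
  TensorProduct.map LinearMap.id
    ((TensorProduct.mk k (HD k H) (HD k H)).flip (hone k H))

/-- The embedding of `H(H*)⊗²` in legs 1,3 of the triple tensor power. -/
def leg13 : HD k H ⊗[k] HD k H →ₗ[k] HD k H ⊗[k] (HD k H ⊗[k] HD k H) :=
  TensorProduct.map LinearMap.id (TensorProduct.mk k (HD k H) (HD k H) (hone k H))

/-- The embedding of `H(H*)⊗²` in legs 2,3 of the triple tensor power. -/
def leg23 : HD k H ⊗[k] HD k H →ₗ[k] HD k H ⊗[k] (HD k H ⊗[k] HD k H) :=
  TensorProduct.mk k (HD k H) (HD k H ⊗[k] HD k H) (hone k H)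

/-- The canonical element `W = Σ_i (ε # e_i) ⊗ (e^i # 1)`. -/
def canW {I : Type*} [Fintype I] (B : Module.Basis I k H) : HD k H ⊗[k] HD k H :=
  ∑ i : I, ((Coalgebra.counit : Module.Dual k H) ⊗ₜ B i) ⊗ₜ ((B.coord i) ⊗ₜ (1 : H))

end

/-!
Both `W` and `W̃` lie in the span of the elements `(ε # a) ⊗ (φ # 1)`, which multiply as
`(ε # a)(ε # b) ⊗ (φ # 1)(ψ # 1) = (ε # ab) ⊗ (φ ∗ ψ # 1)`. Identifying `H* ⊗ H` with
`End(H)` turns this product into the convolution product, and sends `Σ e^i ⊗ f(e_i)` to `f`.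
Hence `W W̃` and `W̃ W` correspond to `id ⋆ S` and `S ⋆ id`, both equal to the convolution
unit `η ∘ ε`, which corresponds to `(ε # 1) ⊗ (ε # 1)`.
-/

open TensorProduct Coalgebra WithConv

section ConvolutionDualTensor

variable {k M N : Type*} [CommRing k] [AddCommGroup M] [Module k M] [AddCommGroup N] [Module k N]

theorem dualTensorHom_sum_coord_tmul {I : Type*} [Fintype I] (B : Module.Basis I k M)
    (f : M →ₗ[k] N) : dualTensorHom k M N (∑ i, B.coord i ⊗ₜ f (B i)) = f := by
  ext m
  simp only [map_sum, LinearMap.coe_sum, Finset.sum_apply, dualTensorHom_apply,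
    Module.Basis.coord_apply, ← map_smul]
  rw [← map_sum, B.sum_repr]

variable {H : Type*} [Ring H] [HopfAlgebra k H]

theorem convL_apply (ξ ν : Module.Dual k H) (h : H) :
    convL k H ξ ν h = (toConv ξ * toConv ν) h :=
  rfl

theorem toConv_counit : toConv (counit : Module.Dual k H) = 1 := by
  ext h
  simp

theorem toConv_dualTensorHom_convL_tmul_mul (φ ψ : Module.Dual k H) (a b : H) :
    toConv (dualTensorHom k H H (convL k H φ ψ ⊗ₜ (a * b))) =
      toConv (dualTensorHom k H H (φ ⊗ₜ a)) * toConv (dualTensorHom k H H (ψ ⊗ₜ b)) := by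
  ext h
  simp only [dualTensorHom_apply, convL_apply, (ℛ k h).convMul_apply, Finset.sum_smul,
    smul_mul_smul_comm]

theorem toConv_dualTensorHom_counit_tmul_one :
    toConv (dualTensorHom k H H ((counit : Module.Dual k H) ⊗ₜ 1)) = 1 := by
  ext h
  simp [dualTensorHom_apply, Algebra.algebraMap_eq_smul_one]

/-- Under `H* ⊗ H ≃ End(H)` this is `f ⋆ g = 1`. -/
theorem sum_convL_coord_tmul_mul_of_convMul_eq_one {I : Type*} [Fintype I]
    (B : Module.Basis I k H) (f g : H →ₗ[k] H) (hfg : toConv f * toConv g = 1) :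
    ∑ i, ∑ j, convL k H (B.coord i) (B.coord j) ⊗ₜ (f (B i) * g (B j)) =
      (counit : Module.Dual k H) ⊗ₜ[k] (1 : H) := by
  have : Module.Finite k H := .of_basis B
  have : Module.Projective k H := .of_basis B
  refine (dualTensorHom_bijective (R := k) (M := H) (N := H)).injective
    (toConv_injective ?_)
  calc toConv (dualTensorHom k H H
          (∑ i, ∑ j, convL k H (B.coord i) (B.coord j) ⊗ₜ (f (B i) * g (B j))))
      = toConv (dualTensorHom k H H (∑ i, B.coord i ⊗ₜ f (B i))) *
          toConv (dualTensorHom k H H (∑ j, B.coord j ⊗ₜ g (B j))) := by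
        simp only [map_sum, toConv_sum, toConv_dualTensorHom_convL_tmul_mul, Finset.sum_mul_sum]
    _ = 1 := by rw [dualTensorHom_sum_coord_tmul, dualTensorHom_sum_coord_tmul, hfg]
    _ = _ := toConv_dualTensorHom_counit_tmul_one.symm

end ConvolutionDualTensor

section HeisenbergDouble

variable {k H : Type*} [CommRing k] [Ring H] [HopfAlgebra k H]

theorem hmul_tmul (ξ ν : Module.Dual k H) (a b : H) :
    hmul k H (ξ ⊗ₜ a) (ν ⊗ₜ b) =
      map (convL k H ξ ∘ₗ (rActL k H).flip ν) (LinearMap.mulRight k b) (comul a) := by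
  simp only [hmul, hmulT, LinearMap.coe_comp, Function.comp_apply, LinearEquiv.coe_coe,
    tensorTensorTensorComm_tmul, map_tmul, LinearMap.id_coe, id_eq]
  induction comul (R := k) a using TensorProduct.induction_on with
  | zero => simp
  | tmul x y => simp [convT, rActT, rActL]
  | add u v hu hv => simp only [add_tmul, map_add, tmul_add, hu, hv]

theorem convL_counit_left (ν : Module.Dual k H) : convL k H counit ν = ν := by
  ext h
  rw [convL_apply, toConv_counit, one_mul]

theorem rActL_counit (a : H) :
    rActL k H a (counit : Module.Dual k H) = counit (R := k) a • (counit : Module.Dual k H) := by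
  ext b
  simp [rActL, mul_comm]

theorem rActL_one (ν : Module.Dual k H) : rActL k H 1 ν = ν := by
  ext b
  simp [rActL]

theorem hmul_counit_tmul_counit_tmul (a b : H) :
    hmul k H ((counit : Module.Dual k H) ⊗ₜ a) (counit ⊗ₜ b) = counit ⊗ₜ (a * b) := by
  rw [hmul_tmul, ← (ℛ k a).eq, map_sum]
  simp only [map_tmul, LinearMap.coe_comp, Function.comp_apply, LinearMap.flip_apply,
    rActL_counit, map_smul, convL_counit_left, LinearMap.mulRight_apply, smul_tmul,
    ← tmul_sum, ← smul_mul_assoc, ← Finset.sum_mul, sum_counit_smul (ℛ k a)]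

theorem hmul_tmul_one_tmul_one (φ ψ : Module.Dual k H) :
    hmul k H (φ ⊗ₜ 1) (ψ ⊗ₜ 1) = convL k H φ ψ ⊗ₜ 1 := by
  simp [hmul_tmul, Algebra.TensorProduct.one_def, rActL_one]

theorem hmul2T_tmul (x y z w : HD k H) :
    hmul2T k H ((x ⊗ₜ y) ⊗ₜ (z ⊗ₜ w)) = hmul k H x z ⊗ₜ hmul k H y w :=
  rfl

def dualTensorToHD2 : Module.Dual k H ⊗[k] H →ₗ[k] HD k H ⊗[k] HD k H :=
  map (mk k (Module.Dual k H) H counit) ((mk k (Module.Dual k H) H).flip 1)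
    ∘ₗ (TensorProduct.comm k (Module.Dual k H) H).toLinearMap

theorem dualTensorToHD2_tmul (φ : Module.Dual k H) (a : H) :
    dualTensorToHD2 (φ ⊗ₜ a) = ((counit : Module.Dual k H) ⊗ₜ a) ⊗ₜ[k] (φ ⊗ₜ[k] (1 : H)) :=
  rfl

theorem hmul2_eq_hone_tmul_hone_of_convMul_eq_one {I : Type*} [Fintype I]
    (B : Module.Basis I k H) (f g : H →ₗ[k] H) (hfg : toConv f * toConv g = 1) :
    hmul2 k H (∑ i, ((counit : Module.Dual k H) ⊗ₜ f (B i)) ⊗ₜ (B.coord i ⊗ₜ (1 : H)))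
        (∑ j, ((counit : Module.Dual k H) ⊗ₜ g (B j)) ⊗ₜ (B.coord j ⊗ₜ (1 : H))) =
      hone k H ⊗ₜ hone k H :=
  calc _ = dualTensorToHD2
          (∑ i, ∑ j, convL k H (B.coord i) (B.coord j) ⊗ₜ (f (B i) * g (B j))) := by
        rw [hmul2, sum_tmul, map_sum]
        simp only [tmul_sum, map_sum, hmul2T_tmul, hmul_counit_tmul_counit_tmul,
          hmul_tmul_one_tmul_one, dualTensorToHD2_tmul]
    _ = hone k H ⊗ₜ hone k H := by
        rw [sum_convL_coord_tmul_mul_of_convMul_eq_one B f g hfg]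
        rfl

end HeisenbergDouble

theorem stmt_10_general {k H : Type*} [Field k] [Ring H] [HopfAlgebra k H]
    {I : Type*} [Fintype I] (B : Module.Basis I k H) :
    hmul2 k H (canW k H B)
      (∑ i : I, ((Coalgebra.counit : Module.Dual k H) ⊗ₜ
          HopfAlgebra.antipode (R := k) (B i)) ⊗ₜ ((B.coord i) ⊗ₜ (1 : H)))
      = hone k H ⊗ₜ hone k H ∧
    hmul2 k H
      (∑ i : I, ((Coalgebra.counit : Module.Dual k H) ⊗ₜ
          HopfAlgebra.antipode (R := k) (B i)) ⊗ₜ ((B.coord i) ⊗ₜ (1 : H)))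
      (canW k H B)
      = hone k H ⊗ₜ hone k H :=
  ⟨hmul2_eq_hone_tmul_hone_of_convMul_eq_one B .id _ LinearMap.id_mul_antipode,
    hmul2_eq_hone_tmul_hone_of_convMul_eq_one B _ .id LinearMap.antipode_mul_id⟩

/-- in the Heisenberg double `H(H*)` of a finite-dimensional Hopf
algebra with invertible antipode `S`, `W̃ = Σ_i (ε # S(e_i)) ⊗ (e^i # 1)` is a
two-sided inverse of the canonical element `W = Σ_i (ε # e_i) ⊗ (e^i # 1)`. -/
theorem stmt_10 {k H : Type*} [Field k] [Ring H] [HopfAlgebra k H]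
    {I : Type*} [Fintype I] (B : Module.Basis I k H)
    (hS : Function.Bijective (HopfAlgebra.antipode (R := k) (A := H))) :
    hmul2 k H (canW k H B)
      (∑ i : I, ((Coalgebra.counit : Module.Dual k H) ⊗ₜ
          HopfAlgebra.antipode (R := k) (B i)) ⊗ₜ ((B.coord i) ⊗ₜ (1 : H)))
      = hone k H ⊗ₜ hone k H ∧
    hmul2 k H
      (∑ i : I, ((Coalgebra.counit : Module.Dual k H) ⊗ₜ
          HopfAlgebra.antipode (R := k) (B i)) ⊗ₜ ((B.coord i) ⊗ₜ (1 : H)))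
      (canW k H B)
      = hone k H ⊗ₜ hone k H :=
  stmt_10_general B
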